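/- arXiv:1909.00329 — 2 statements merged into one kernel-verified Lean document; each statement's English description precedes it below -/
import Mathlib

section
/- (Consistency.) (a) If 1 ≤ i ≤ K−1 and g_i ≤ 1/(h_{i+1}·√P), then g_{i−1} ≤ 1/(h_i·√P). (b) If 1 ≤ i ≤ K−1 and g_i > 1/(h_i·√P), then g_{i+1} > 1/(h_{i+1}·√P). -/
/-!
Writing `S_i = ∑_{k ≤ i} h_k` and `Q_i = σ² + P ∑_{k ≤ i} h_k²`, the comparison
`g_i ≤ 1/(x √P)` is equivalent to `P x S_i ≤ Q_i`. Passing from `i` to `i + 1` adds `h_{i+1}`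
to `S` and `P h_{i+1}²` to `Q`, so both parts reduce to the monotonicity `h_i ≤ h_{i+1}`
together with `S_i ≥ 0`.
-/

open Finset

/-- `g₀ = 0` and `g_i = √P (∑_{k=1}^i h_k)/(σ² + P ∑_{k=1}^i h_k²)`. -/
noncomputable def g (h : ℕ → ℝ) (P σ : ℝ) (i : ℕ) : ℝ :=
  Real.sqrt P * (∑ k ∈ Finset.Icc 1 i, h k) /
    (σ ^ 2 + P * ∑ k ∈ Finset.Icc 1 i, (h k) ^ 2)

lemma pos_of_pos_of_le_succ {h : ℕ → ℝ} {K : ℕ} (hpos : 0 < h 1)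
    (hmono : ∀ k, 1 ≤ k → k < K → h k ≤ h (k + 1)) (k : ℕ) (hk : 1 ≤ k) (hkK : k ≤ K) :
    0 < h k := by
  induction k, hk using Nat.le_induction with
  | base => exact hpos
  | succ n hn ih => exact (ih (by omega)).trans_le (hmono n hn (by omega))

lemma g_le_one_div_iff {h : ℕ → ℝ} {P σ x : ℝ} (hP : 0 < P) (hσ : σ ≠ 0) (hx : 0 < x)
    (i : ℕ) :
    g h P σ i ≤ 1 / (x * Real.sqrt P) ↔
      P * x * ∑ k ∈ Icc 1 i, h k ≤ σ ^ 2 + P * ∑ k ∈ Icc 1 i, h k ^ 2 := by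
  have hQ : 0 < σ ^ 2 + P * ∑ k ∈ Icc 1 i, h k ^ 2 := by positivity
  have hs : 0 < Real.sqrt P := Real.sqrt_pos.mpr hP
  rw [g, div_le_div_iff₀ hQ (mul_pos hx hs), one_mul,
    show (Real.sqrt P * ∑ k ∈ Icc 1 i, h k) * (x * Real.sqrt P)
      = Real.sqrt P ^ 2 * x * ∑ k ∈ Icc 1 i, h k by ring, Real.sq_sqrt hP.le]

lemma mul_le_of_mul_add_le_add_sq {P S Q a b : ℝ} (hP : 0 ≤ P) (hS : 0 ≤ S) (ha : 0 ≤ a)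
    (hab : a ≤ b) (h : P * b * (S + a) ≤ Q + P * a ^ 2) : P * a * S ≤ Q := by
  nlinarith [mul_nonneg (mul_nonneg hP (sub_nonneg.2 hab)) (add_nonneg hS ha)]

lemma add_sq_lt_mul_add {P S Q a b : ℝ} (hP : 0 ≤ P) (hS : 0 ≤ S) (hab : a ≤ b)
    (h : Q < P * a * S) : Q + P * b ^ 2 < P * b * (S + b) := by
  nlinarith [mul_nonneg (mul_nonneg hP (sub_nonneg.2 hab)) hS]

theorem stmt_5_general (K : ℕ) (h : ℕ → ℝ) (P σ : ℝ) (hP : 0 < P) (hσ : 0 < σ)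
    (hpos : 0 < h 1) (hmono : ∀ k, 1 ≤ k → k < K → h k ≤ h (k + 1)) :
    -- (a)
    (∀ i, 1 ≤ i → i ≤ K - 1 → g h P σ i ≤ 1 / (h (i + 1) * Real.sqrt P) →
      g h P σ (i - 1) ≤ 1 / (h i * Real.sqrt P)) ∧
    -- (b)
    (∀ i, 1 ≤ i → i ≤ K - 1 → 1 / (h i * Real.sqrt P) < g h P σ i →
      1 / (h (i + 1) * Real.sqrt P) < g h P σ (i + 1)) := by
  have h_pos := pos_of_pos_of_le_succ hpos hmono
  have hS (i : ℕ) (hi : i ≤ K) : 0 ≤ ∑ k ∈ Icc 1 i, h k :=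
    sum_nonneg fun k hk ↦ (h_pos k (mem_Icc.1 hk).1 ((mem_Icc.1 hk).2.trans hi)).le
  refine ⟨fun i hi hiK hg ↦ ?_, fun i hi hiK hg ↦ ?_⟩
  · obtain ⟨m, rfl⟩ : ∃ m, i = m + 1 := ⟨i - 1, by omega⟩
    rw [g_le_one_div_iff hP hσ.ne' (h_pos _ (by omega) (by omega)), sum_Icc_succ_top (by omega),
      sum_Icc_succ_top (by omega), mul_add] at hg
    rw [Nat.add_sub_cancel, g_le_one_div_iff hP hσ.ne' (h_pos _ (by omega) (by omega))]
    exact mul_le_of_mul_add_le_add_sq hP.le (hS m (by omega))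
      (h_pos _ (by omega) (by omega)).le (hmono _ (by omega) (by omega)) (by linarith)
  · rw [← not_le, g_le_one_div_iff hP hσ.ne' (h_pos _ hi (by omega)), not_le] at hg
    rw [← not_le, g_le_one_div_iff hP hσ.ne' (h_pos _ (by omega) (by omega)), not_le,
      sum_Icc_succ_top (by omega), sum_Icc_succ_top (by omega), mul_add]
    linarith [add_sq_lt_mul_add hP.le (hS i (by omega)) (hmono i hi (by omega)) hg]

theorem stmt_5 (K : ℕ) (hK : 1 ≤ K) (h : ℕ → ℝ) (P σ : ℝ) (hP : 0 < P) (hσ : 0 < σ)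
    (hpos : 0 < h 1) (hmono : ∀ k, 1 ≤ k → k < K → h k ≤ h (k + 1)) :
    -- (a)
    (∀ i, 1 ≤ i → i ≤ K - 1 → g h P σ i ≤ 1 / (h (i + 1) * Real.sqrt P) →
      g h P σ (i - 1) ≤ 1 / (h i * Real.sqrt P)) ∧
    -- (b)
    (∀ i, 1 ≤ i → i ≤ K - 1 → 1 / (h i * Real.sqrt P) < g h P σ i →
      1 / (h (i + 1) * Real.sqrt P) < g h P σ (i + 1)) :=
  stmt_5_general K h P σ hP hσ hpos hmono
end

section
/- (Expected MSE bound for a first-ι policy.) Let K ≥ 2 be an integer, let ι ∈ {2,…,K}, and let P, σ > 0. For x ∈ ℝ^K with positive coordinates, define the random channel-dependent intervals 𝒮_ι(x) = (1/(√(x_(ι+1))·√P), 1/(√(x_(ι))·√P)] if ι < K and 𝒮_K(x) = [0, 1/(√(x_(K))·√P)], and define f_ι(a; x) = ∑_{k=1}^ι (a·√(x_(k))·√P − 1)² + σ²·a². Then for every measurable map a : ℝ^K → ℝ such that a(x) ∈ 𝒮_ι(x) for μ^K-almost every x, one has ∫_{ℝ^K} f_ι(a(x); x) dμ^K(x) ≤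 ι + σ²·K/(P·(ι−1)); equivalently, the average computation MSE of the first-ι policy satisfies E[MSE]/K ≤ ι/K + σ²/(P·(ι−1)). -/
open MeasureTheory ProbabilityTheory Finset
open scoped ENNReal

/-- The `K`-fold product of the standard exponential distribution, modeling `K` i.i.d.
standard exponential channel power gains. -/
noncomputable def muK (K : ℕ) : Measure (Fin K → ℝ) :=
  Measure.pi fun _ => ProbabilityTheory.expMeasure 1

/-- The `i`-th order statistic (0-based) of the coordinates of `x : Fin K → ℝ`:
the coordinates sorted in increasing order (so `orderStat x ⟨k-1, _⟩ = x_(k)`,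
and the channel coefficients are `h_k(x) = √(x_(k))`). -/
noncomputable def orderStat {K : ℕ} (x : Fin K → ℝ) (i : Fin K) : ℝ :=
  x (Tuple.sort x i)

section Aux

open Real Set
open scoped ENNReal

private lemma beta_nat (a : ℕ) : ∀ b : ℕ, ∫ u in (0:ℝ)..1, u ^ b * (1 - u) ^ a
    = (a.factorial * b.factorial : ℝ) / ((a + b + 1).factorial) := by
  induction a with
  | zero =>
    intro b
    simp only [pow_zero, mul_one, integral_pow, one_pow, Nat.zero_add, Nat.factorial_zero,
      Nat.cast_one, one_mul]
    rw [Nat.factorial_succ]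
    push_cast
    rw [eq_div_iff (by positivity)]
    rw [zero_pow (Nat.succ_ne_zero b)]
    field_simp
    norm_num
  | succ a ih =>
    intro b
    have h := intervalIntegral.integral_mul_deriv_eq_deriv_mul
      (u := fun u : ℝ => (1 - u) ^ (a+1)) (u' := fun u : ℝ => -((a+1) * (1 - u) ^ a))
      (v := fun u : ℝ => u ^ (b+1) / (b+1)) (v' := fun u : ℝ => u ^ b)
      (a := (0:ℝ)) (b := (1:ℝ))
      (fun x _ => by
        have : HasDerivAt (fun u : ℝ => (1 - u) ^ (a+1)) (((a+1:ℕ) * (1 - x) ^ a) * (-1)) x :=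
          (((hasDerivAt_id x).const_sub 1).fun_pow (a+1))
        apply this.congr_deriv; push_cast; ring)
      (fun x _ => by
        have : HasDerivAt (fun u : ℝ => u ^ (b+1) / (b+1:ℝ)) (((b+1:ℕ) * x ^ b) / (b+1:ℝ)) x :=
          (hasDerivAt_pow (b+1) x).div_const _
        apply this.congr_deriv; push_cast; field_simp)
      (Continuous.intervalIntegrable (by continuity) _ _)
      (Continuous.intervalIntegrable (by continuity) _ _)
    have h2 : ∫ u in (0:ℝ)..1, u ^ b * (1 - u) ^ (a+1)
        = ((a:ℝ)+1)/((b:ℝ)+1) * ∫ u in (0:ℝ)..1, u ^ (b+1) * (1 - u) ^ a := by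
      have e1 : ∀ u : ℝ, u ^ b * (1-u)^(a+1) = (1-u)^(a+1) * u ^ b := fun u => by ring
      simp only [e1]
      rw [h]
      have e2 : ∀ x:ℝ, -(((a:ℝ)+1)*(1-x)^a) * (x^(b+1)/((b:ℝ)+1))
          = -( (((a:ℝ)+1)/((b:ℝ)+1)) * (x^(b+1)*(1-x)^a) ) := by
        intro x; ring
      simp only [e2, intervalIntegral.integral_neg, intervalIntegral.integral_const_mul]
      norm_num
    rw [h2, ih (b+1)]
    have e3 : a + (b+1) + 1 = (a+1) + b + 1 := by omega
    rw [e3]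
    have hpos : (0:ℝ) < ((a+1)+b+1).factorial := by positivity
    field_simp
    rw [Nat.factorial_succ a, Nat.factorial_succ b]
    push_cast
    ring

private lemma exp_neg_image : (fun s : ℝ => exp (-s)) '' (Set.Ioi 0) = Set.Ioo 0 1 := by
  ext u
  constructor
  · rintro ⟨s, hs, rfl⟩
    exact ⟨exp_pos _, exp_lt_one_iff.mpr (by simpa using hs)⟩
  · rintro ⟨h0, h1⟩
    exact ⟨-Real.log u, by simpa using Real.log_neg h0 h1, by simp [Real.exp_log h0]⟩

private lemma beta_subst (a b : ℕ) :
    ∫ s in Ioi (0:ℝ), exp (-s) * (exp (-s) ^ b * (1 - exp (-s)) ^ a)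
    = (a.factorial * b.factorial : ℝ) / ((a + b + 1).factorial) := by
  have hderiv : ∀ x ∈ Ioi (0:ℝ),
      HasDerivWithinAt (fun s : ℝ => exp (-s)) (-exp (-x)) (Ioi 0) x := by
    intro x _
    have : HasDerivAt (fun s : ℝ => exp (-s)) (exp (-x) * (-1)) x :=
      (Real.hasDerivAt_exp (-x)).comp x ((hasDerivAt_id x).neg)
    exact (this.congr_deriv (by ring)).hasDerivWithinAt
  have hinj : InjOn (fun s : ℝ => exp (-s)) (Ioi 0) :=
    (Real.exp_injective.injOn).comp neg_injective.injOn (Set.mapsTo_univ _ _)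
      |>.mono (subset_univ _)
  have h := integral_image_eq_integral_abs_deriv_smul measurableSet_Ioi hderiv hinj
    (fun u => u ^ b * (1 - u) ^ a)
  rw [exp_neg_image] at h
  have h2 : ∫ u in Ioo (0:ℝ) 1, u ^ b * (1-u) ^ a
      = (a.factorial * b.factorial : ℝ) / ((a + b + 1).factorial) := by
    rw [← integral_Ioc_eq_integral_Ioo, ← intervalIntegral.integral_of_le zero_le_one]
    exact beta_nat a b
  rw [h2] at h
  rw [h]
  apply setIntegral_congr_fun measurableSet_Ioi
  intro s _
  simp only [smul_eq_mul, abs_neg, abs_of_pos (exp_pos _)]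

private lemma beta_integrable (a b : ℕ) :
    IntegrableOn (fun s => exp (-s) * (exp (-s) ^ b * (1 - exp (-s)) ^ a)) (Ioi (0:ℝ)) := by
  apply Integrable.mono (g := fun s : ℝ => exp (-s))
    (exp_neg_integrableOn_Ioi 0 one_pos |>.congr_fun (fun x _ => by norm_num) measurableSet_Ioi)
  · exact (Continuous.aestronglyMeasurable (by continuity)).restrict
  · filter_upwards [ae_restrict_mem measurableSet_Ioi] with s hs
    have h1 : 0 < exp (-s) := exp_pos _
    have h2 : exp (-s) ≤ 1 := exp_le_one_iff.mpr (by simp [le_of_lt (Set.mem_Ioi.mp hs)])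
    have h3 : 0 ≤ 1 - exp (-s) := by linarith
    have h4 : 1 - exp (-s) ≤ 1 := by linarith
    simp only [norm_mul, norm_eq_abs, norm_pow, abs_of_pos h1, abs_of_nonneg h3]
    calc exp (-s) * (exp (-s) ^ b * (1 - exp (-s)) ^ a) ≤ exp (-s) * 1 := by
          apply mul_le_mul_of_nonneg_left _ h1.le
          exact mul_le_one₀ (pow_le_one₀ h1.le h2) (by positivity) (pow_le_one₀ h3 h4)
      _ = exp (-s) := mul_one _

private lemma expMeasure_one_def : expMeasure 1 = volume.withDensity (exponentialPDF 1) := rfl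

private instance : IsProbabilityMeasure (expMeasure 1) := isProbabilityMeasure_expMeasure one_pos

private lemma expMeasure_Iic {s : ℝ} (hs : 0 ≤ s) :
    expMeasure 1 (Iic s) = ENNReal.ofReal (1 - exp (-s)) := by
  rw [expMeasure_one_def, withDensity_apply _ measurableSet_Iic,
    lintegral_exponentialPDF_eq_antiDeriv one_pos, if_pos hs, one_mul]

private lemma expMeasure_singleton (s : ℝ) : expMeasure 1 {s} = 0 := by
  rw [expMeasure_one_def, withDensity_apply _ (measurableSet_singleton s)]
  rw [Measure.restrict_eq_zero.mpr (measure_singleton s)]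
  exact lintegral_zero_measure _

private lemma expMeasure_Iio {s : ℝ} (hs : 0 ≤ s) :
    expMeasure 1 (Iio s) = ENNReal.ofReal (1 - exp (-s)) := by
  rw [← Set.Iic_diff_right, measure_diff_null (expMeasure_singleton s), expMeasure_Iic hs]

private lemma expMeasure_Ici {s : ℝ} (hs : 0 ≤ s) :
    expMeasure 1 (Ici s) = ENNReal.ofReal (exp (-s)) := by
  have h2 : exp (-s) ≤ 1 := exp_le_one_iff.mpr (neg_nonpos.mpr hs)
  rw [← Set.compl_Iio, measure_compl measurableSet_Iio (measure_ne_top _ _),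
    expMeasure_Iio hs, measure_univ, ← ENNReal.ofReal_one,
    ← ENNReal.ofReal_sub _ (by linarith)]
  norm_num

private lemma expMeasure_Iic_zero : expMeasure 1 (Set.Iic 0) = 0 := by
  rw [expMeasure_Iic le_rfl]; simp

private lemma outer_le (a b : ℕ) :
    ∫⁻ s, ENNReal.ofReal (1/s) * (expMeasure 1 (Iio s))^(a+1) * (expMeasure 1 (Ici s))^b
      ∂(expMeasure 1)
    ≤ ENNReal.ofReal ((a.factorial * b.factorial : ℝ) / ((a+b+1).factorial)) := by
  set g : ℝ → ℝ≥0∞ := fun s =>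
    ENNReal.ofReal (1/s) * (expMeasure 1 (Iio s))^(a+1) * (expMeasure 1 (Ici s))^b with hg
  have hsplit : ∫⁻ s, g s ∂(expMeasure 1) = ∫⁻ s in Ioi (0:ℝ), g s ∂(expMeasure 1) := by
    rw [← lintegral_add_compl (μ := expMeasure 1) g measurableSet_Ioi]
    have : (Set.Ioi (0:ℝ))ᶜ = Set.Iic 0 := Set.compl_Ioi
    rw [this, setLIntegral_measure_zero _ _ expMeasure_Iic_zero, add_zero]
  rw [hsplit]
  have hmono : ∫⁻ s in Ioi (0:ℝ), g s ∂(expMeasure 1)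
      ≤ ∫⁻ s in Ioi (0:ℝ), ENNReal.ofReal ((exp (-s)) ^ b * (1 - exp (-s)) ^ a)
          ∂(expMeasure 1) := by
    apply setLIntegral_mono (by fun_prop)
    intro s hs
    have hs0 : (0:ℝ) < s := hs
    have h1 : 0 < exp (-s) := exp_pos _
    have h2 : exp (-s) ≤ 1 := exp_le_one_iff.mpr (by linarith)
    have h3 : 0 ≤ 1 - exp (-s) := by linarith
    rw [hg]
    simp only
    rw [expMeasure_Iio hs0.le, expMeasure_Ici hs0.le,
      ← ENNReal.ofReal_pow h3, ← ENNReal.ofReal_pow h1.le,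
      ← ENNReal.ofReal_mul (by positivity), ← ENNReal.ofReal_mul (by positivity)]
    apply ENNReal.ofReal_le_ofReal
    have key : (1/s) * (1 - exp (-s)) ≤ 1 := by
      rw [div_mul_eq_mul_div, one_mul, div_le_one hs0]
      nlinarith [add_one_le_exp (-s), exp_pos (-s)]
    calc 1/s * (1 - exp (-s)) ^ (a+1) * exp (-s) ^ b
        = (1/s * (1 - exp (-s))) * ((1 - exp (-s)) ^ a * exp (-s) ^ b) := by ring
      _ ≤ 1 * ((1 - exp (-s)) ^ a * exp (-s) ^ b) := by
          apply mul_le_mul_of_nonneg_right key (by positivity)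
      _ = exp (-s) ^ b * (1 - exp (-s)) ^ a := by ring
  refine hmono.trans ?_
  have hwd : ∫⁻ s in Ioi (0:ℝ), ENNReal.ofReal ((exp (-s)) ^ b * (1 - exp (-s)) ^ a)
        ∂(expMeasure 1)
      = ∫⁻ s in Ioi (0:ℝ),
          exponentialPDF 1 s * ENNReal.ofReal ((exp (-s)) ^ b * (1 - exp (-s)) ^ a)
        ∂(volume) := by
    have hpdf : Measurable (exponentialPDF 1) := (measurable_exponentialPDFReal 1).ennreal_ofReal
    have hfm : Measurable fun s : ℝ => ENNReal.ofReal ((exp (-s)) ^ b * (1 - exp (-s)) ^ a) := by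
      fun_prop
    rw [expMeasure_one_def, restrict_withDensity measurableSet_Ioi,
      lintegral_withDensity_eq_lintegral_mul _ hpdf hfm]
    rfl
  rw [hwd]
  have hcongr : ∫⁻ s in Ioi (0:ℝ), exponentialPDF 1 s
        * ENNReal.ofReal ((exp (-s)) ^ b * (1 - exp (-s)) ^ a) ∂(volume)
      = ∫⁻ s in Ioi (0:ℝ),
          ENNReal.ofReal (exp (-s) * (exp (-s) ^ b * (1 - exp (-s)) ^ a)) ∂(volume) := by
    apply setLIntegral_congr_fun measurableSet_Ioi
    intro s hs
    dsimp only
    rw [exponentialPDF_of_nonneg (le_of_lt (Set.mem_Ioi.mp hs)), ← ENNReal.ofReal_mul (by positivity)]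
    norm_num
  rw [hcongr, ← ofReal_integral_eq_lintegral_ofReal (beta_integrable a b) ?_, beta_subst a b]
  filter_upwards [ae_restrict_mem measurableSet_Ioi] with s hs
  have h1 : 0 < exp (-s) := exp_pos _
  have h2 : exp (-s) ≤ 1 := exp_le_one_iff.mpr (by simpa using le_of_lt hs)
  have h3 : (0:ℝ) ≤ 1 - exp (-s) := by linarith
  exact mul_nonneg h1.le (mul_nonneg (by positivity) (pow_nonneg h3 a))

private lemma term_int_le (m p q : ℕ) (hm : p + 1 + q = m) (k : Fin (m+1))
    (S : Finset (Fin (m+1)))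
    (hS : S ⊆ Finset.univ.erase k) (hcard : S.card = p + 1) :
    ∫⁻ x : Fin (m+1) → ℝ, (ENNReal.ofReal (1 / x k) *
        ∏ j : Fin (m+1), (if (if j ∈ S then x j < x k else x k ≤ x j) then (1:ℝ≥0∞) else 0))
      ∂(muK (m+1))
    ≤ ENNReal.ofReal ((p.factorial * q.factorial : ℝ) / ((p+q+1).factorial)) := by
  classical
  set ν := expMeasure 1 with hν
  set h : ℝ × (Fin m → ℝ) → ℝ≥0∞ := fun z =>
    ENNReal.ofReal (1/z.1) * ∏ j : Fin m,
      (if (if k.succAbove j ∈ S then z.2 j < z.1 else z.1 ≤ z.2 j) then (1:ℝ≥0∞) else 0) with hh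
  have hhm : Measurable h := by
    apply Measurable.mul
    · exact (measurable_fst.const_div 1).ennreal_ofReal
    · apply Finset.measurable_prod
      intro j _
      by_cases hj : k.succAbove j ∈ S
      · simp only [hj, if_true]
        exact Measurable.ite (measurableSet_lt (measurable_snd.eval) measurable_fst)
          measurable_const measurable_const
      · simp only [hj, if_false]
        exact Measurable.ite (measurableSet_le measurable_fst (measurable_snd.eval))
          measurable_const measurable_const
  have hmp := measurePreserving_piFinSuccAbove (fun _ : Fin (m+1) => ν) k
  have hcomp : ∀ x : Fin (m+1) → ℝ,
      h (MeasurableEquiv.piFinSuccAbove (fun _ => ℝ) k x)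
      = ENNReal.ofReal (1 / x k) *
        ∏ j : Fin (m+1), (if (if j ∈ S then x j < x k else x k ≤ x j) then (1:ℝ≥0∞) else 0) := by
    intro x
    rw [hh]
    simp only [MeasurableEquiv.piFinSuccAbove_apply]
    congr 1
    rw [Fin.prod_univ_succAbove
      (fun j => (if (if j ∈ S then x j < x k else x k ≤ x j) then (1:ℝ≥0∞) else 0)) k]
    have hk : k ∉ S := fun hc => (Finset.mem_erase.mp (hS hc)).1 rfl
    simp only [hk, if_false, le_refl, if_true, one_mul]
    rfl
  have step1 : ∫⁻ x : Fin (m+1) → ℝ, (ENNReal.ofReal (1 / x k) *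
        ∏ j : Fin (m+1), (if (if j ∈ S then x j < x k else x k ≤ x j) then (1:ℝ≥0∞) else 0))
      ∂(muK (m+1)) = ∫⁻ z, h z ∂(ν.prod (Measure.pi fun _ : Fin m => ν)) := by
    rw [← hmp.lintegral_comp hhm]
    exact lintegral_congr fun x => (hcomp x).symm
  rw [step1, lintegral_prod h hhm.aemeasurable]
  have hinner : ∀ s : ℝ, ∫⁻ y, h (s, y) ∂(Measure.pi fun _ : Fin m => ν)
      = ENNReal.ofReal (1/s) * (ν (Iio s))^(p+1) * (ν (Ici s))^q := by
    intro s
    set A : Fin m → Set ℝ := fun j => if k.succAbove j ∈ S then Iio s else Ici s with hA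
    have hAm : ∀ j, MeasurableSet (A j) := by
      intro j; rw [hA]; by_cases hj : k.succAbove j ∈ S <;> simp [hj, measurableSet_Iio]
    have hprod : ∀ y : Fin m → ℝ,
        (∏ j : Fin m, (if (if k.succAbove j ∈ S then y j < s else s ≤ y j) then (1:ℝ≥0∞) else 0))
        = Set.indicator (Set.univ.pi A) (fun _ => (1:ℝ≥0∞)) y := by
      intro y
      by_cases hy : ∀ j, y j ∈ A j
      · rw [Set.indicator_of_mem (Set.mem_univ_pi.mpr hy)]
        apply Finset.prod_eq_one
        intro j _
        have hmem := hy j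
        rw [hA] at hmem
        by_cases hj : k.succAbove j ∈ S
        · simp only [hj, if_true] at hmem ⊢
          rw [if_pos hmem.out]
        · simp only [hj, if_false] at hmem ⊢
          rw [if_pos hmem.out]
      · rw [Set.indicator_of_notMem (by simpa [Set.mem_univ_pi] using hy)]
        push_neg at hy
        obtain ⟨j0, hj0⟩ := hy
        apply Finset.prod_eq_zero (Finset.mem_univ j0)
        rw [hA] at hj0
        by_cases hj : k.succAbove j0 ∈ S
        · simp only [hj, if_true] at hj0 ⊢
          rw [if_neg (by simpa [Set.mem_Iio] using hj0)]
        · simp only [hj, if_false] at hj0 ⊢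
          rw [if_neg (by simpa [Set.mem_Ici] using hj0)]
    simp only [hh]
    rw [lintegral_const_mul]
    swap
    · apply Finset.measurable_prod
      intro j _
      by_cases hj : k.succAbove j ∈ S
      · simp only [hj, if_true]
        exact Measurable.ite (measurableSet_lt (measurable_pi_apply j) measurable_const)
          measurable_const measurable_const
      · simp only [hj, if_false]
        exact Measurable.ite (measurableSet_le measurable_const (measurable_pi_apply j))
          measurable_const measurable_const
    have : ∫⁻ y, (∏ j : Fin m,
          (if (if k.succAbove j ∈ S then y j < s else s ≤ y j) then (1:ℝ≥0∞) else 0))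
        ∂(Measure.pi fun _ : Fin m => ν) = (Measure.pi fun _ : Fin m => ν) (Set.univ.pi A) := by
      rw [lintegral_congr hprod]
      exact lintegral_indicator_one (MeasurableSet.univ_pi hAm)
    rw [this, Measure.pi_pi]
    have hcount : (∏ j : Fin m, ν (A j)) = (ν (Iio s))^(p+1) * (ν (Ici s))^q := by
      have : ∀ j : Fin m, ν (A j)
          = if k.succAbove j ∈ S then ν (Iio s) else ν (Ici s) := by
        intro j; rw [hA]; by_cases hj : k.succAbove j ∈ S <;> simp [hj]
      rw [Finset.prod_congr rfl (fun j _ => this j), Finset.prod_ite, Finset.prod_const,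
        Finset.prod_const]
      have hc1 : (Finset.univ.filter fun j : Fin m => k.succAbove j ∈ S).card = p + 1 := by
        rw [← hcard]
        apply Finset.card_bij (fun j _ => k.succAbove j)
        · intro j hj; exact (Finset.mem_filter.mp hj).2
        · intro j1 h1 j2 h2 he; exact Fin.succAbove_right_injective he
        · intro b hb
          obtain ⟨j, hj⟩ := Fin.exists_succAbove_eq
            (show b ≠ k from (Finset.mem_erase.mp (hS hb)).1)
          exact ⟨j, Finset.mem_filter.mpr ⟨Finset.mem_univ _, hj ▸ hb⟩, hj⟩
      have hc2 : (Finset.univ.filter fun j : Fin m => ¬(k.succAbove j ∈ S)).card = q := by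
        have := Finset.card_filter_add_card_filter_not
          (s := (Finset.univ : Finset (Fin m))) (p := fun j => k.succAbove j ∈ S)
        rw [hc1, Finset.card_univ, Fintype.card_fin] at this
        omega
      rw [hc1, hc2]
    rw [hcount, mul_assoc]
  rw [lintegral_congr hinner]
  have := outer_le p q
  simpa only [mul_assoc] using this

private lemma muK_ae_pos (K : ℕ) : ∀ᵐ x ∂(muK K), ∀ i, 0 < x i := by
  rw [ae_all_iff]
  intro i
  rw [ae_iff]
  have : {x : Fin K → ℝ | ¬ 0 < x i} = Function.eval i ⁻¹' (Iic 0) := by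
    ext x; simp [not_lt]
  rw [this]
  exact Measure.pi_eval_preimage_null _ expMeasure_Iic_zero

private lemma muK_pair_null (m : ℕ) (i j : Fin (m+1)) (hij : j ≠ i) :
    muK (m+1) {x | x i = x j} = 0 := by
  obtain ⟨j', hj'⟩ := Fin.exists_succAbove_eq hij
  have hmp := measurePreserving_piFinSuccAbove (fun _ : Fin (m+1) => expMeasure 1) i
  set D : Set (ℝ × (Fin m → ℝ)) := {z | z.1 = z.2 j'} with hD
  have hDm : MeasurableSet D := measurableSet_eq_fun measurable_fst (measurable_snd.eval)
  have hpre : {x : Fin (m+1) → ℝ | x i = x j}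
      = (MeasurableEquiv.piFinSuccAbove (fun _ => ℝ) i) ⁻¹' D := by
    ext x
    simp only [Set.mem_preimage, MeasurableEquiv.piFinSuccAbove_apply, hD, Set.mem_setOf_eq]
    rw [show ((Fin.insertNthEquiv (fun _ => ℝ) i).symm x).2 j' = x (i.succAbove j') from rfl,
      show ((Fin.insertNthEquiv (fun _ => ℝ) i).symm x).1 = x i from rfl, hj']
  rw [show muK (m+1) = Measure.pi fun _ => expMeasure 1 from rfl, hpre,
    hmp.measure_preimage hDm.nullMeasurableSet]
  rw [Measure.prod_apply hDm]
  have : ∀ s : ℝ, (Measure.pi fun _ : Fin m => expMeasure 1) (Prod.mk s ⁻¹' D) = 0 := by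
    intro s
    have : Prod.mk s ⁻¹' D = Function.eval j' ⁻¹' ({s} : Set ℝ) := by
      ext y; simp [hD, eq_comm]
    rw [this]
    exact Measure.pi_eval_preimage_null _ (expMeasure_singleton s)
  simp only [this, lintegral_zero]

private lemma muK_ae_inj (m : ℕ) : ∀ᵐ x ∂(muK (m+1)), Function.Injective x := by
  have h : ∀ᵐ x ∂(muK (m+1)), ∀ i j : Fin (m+1), j ≠ i → x i ≠ x j := by
    rw [ae_all_iff]
    intro i
    rw [ae_all_iff]
    intro j
    by_cases hij : j = i
    · subst hij; exact ae_of_all _ fun x h => absurd rfl h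
    · rw [ae_iff]
      have : {x : Fin (m+1) → ℝ | ¬ (j ≠ i → x i ≠ x j)} = {x | x i = x j} := by
        ext x; simp [hij]
      rw [this]
      exact muK_pair_null m i j hij
  filter_upwards [h] with x hx
  intro u v huv
  by_contra hne
  exact hx u v (fun hc => hne hc.symm) huv

private lemma orderStat_mono {K : ℕ} (x : Fin K → ℝ) : Monotone (orderStat x) :=
  Tuple.monotone_sort x

private lemma count_lt_orderStat {K : ℕ} {x : Fin K → ℝ} (hinj : Function.Injective x)
    (i : Fin K) :
    (Finset.univ.filter fun j => x j < orderStat x i).card = (i : ℕ) := by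
  classical
  set σ := Tuple.sort x with hσ
  have hsm : StrictMono (x ∘ σ) :=
    (Tuple.monotone_sort x).strictMono_of_injective (hinj.comp σ.injective)
  have hset : (Finset.univ.filter fun j => x j < orderStat x i)
      = (Finset.Iio i).map ⟨σ, σ.injective⟩ := by
    ext j
    simp only [Finset.mem_filter, Finset.mem_univ, true_and, Finset.mem_map,
      Function.Embedding.coeFn_mk, Finset.mem_Iio]
    constructor
    · intro hj
      refine ⟨σ.symm j, ?_, σ.apply_symm_apply j⟩
      have : (x ∘ σ) (σ.symm j) < (x ∘ σ) i := by
        simpa [Function.comp, σ.apply_symm_apply, orderStat] using hj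
      exact hsm.lt_iff_lt.mp this
    · rintro ⟨l, hl, rfl⟩
      exact hsm hl
  rw [hset, Finset.card_map, Fin.card_Iio]

private lemma card_filter_val_lt {n ι : ℕ} (hι : ι ≤ n) :
    (Finset.univ.filter fun k : Fin n => (k : ℕ) < ι).card = ι := by
  classical
  have h := Finset.card_bij (s := Finset.univ.filter fun k : Fin n => (k : ℕ) < ι)
    (t := Finset.range ι) (fun k _ => (k : ℕ))
    (fun k hk => Finset.mem_range.mpr (Finset.mem_filter.mp hk).2)
    (fun k1 h1 k2 h2 he => Fin.val_injective he)
    (fun b hb => ⟨⟨b, by have := Finset.mem_range.mp hb; omega⟩,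
      Finset.mem_filter.mpr ⟨Finset.mem_univ _, Finset.mem_range.mp hb⟩, rfl⟩)
  rw [h, Finset.card_range]

end Aux

/-- Expected MSE bound for a first-`ι` policy: if the (measurable) Rx-scaling factor
`a(x)` lies a.e. in the random interval `𝒮_ι(x)`, then
`∫ f_ι(a(x); x) dμ^K(x) ≤ ι + σ² K/(P (ι-1))`, where
`f_ι(a; x) = ∑_{k=1}^{ι} (a √(x_(k)) √P - 1)² + σ² a²`
(the sum over `k : Fin K` with `(k : ℕ) < ι` ranges over the `ι` smallest
order statistics, i.e. over `x_(1), …, x_(ι)`). -/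
theorem stmt_19 (K : ℕ) (hK : 2 ≤ K) (ι : ℕ) (hι2 : 2 ≤ ι) (hιK : ι ≤ K)
    (P σ : ℝ) (hP : 0 < P) (hσ : 0 < σ)
    (a : (Fin K → ℝ) → ℝ) (ha : Measurable a)
    -- `a(x) ∈ 𝒮_ι(x)` for `μ^K`-almost every `x`, where
    -- `𝒮_ι(x) = (1/(√(x_(ι+1)) √P), 1/(√(x_(ι)) √P)]` if `ι < K`, and
    -- `𝒮_K(x) = [0, 1/(√(x_(K)) √P)]`
    (hmem : ∀ᵐ x ∂(muK K),
      (if ι = K then 0 ≤ a x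
        else 1 / (Real.sqrt (orderStat x ⟨min ι (K - 1), by omega⟩) * Real.sqrt P)
              < a x) ∧
      a x ≤ 1 / (Real.sqrt (orderStat x ⟨ι - 1, by omega⟩) * Real.sqrt P)) :
    ∫⁻ x : Fin K → ℝ, ENNReal.ofReal
        ((∑ k : Fin K, if (k : ℕ) < ι then
            (a x * Real.sqrt (orderStat x k) * Real.sqrt P - 1) ^ 2 else 0) +
          σ ^ 2 * (a x) ^ 2) ∂(muK K) ≤
      ENNReal.ofReal ((ι : ℝ) + σ ^ 2 * K / (P * ((ι : ℝ) - 1))) := by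
  classical
  obtain ⟨m, rfl⟩ : ∃ m, K = m + 1 := ⟨K - 1, by omega⟩
  haveI : IsProbabilityMeasure (muK (m+1)) := by
    rw [show muK (m+1) = Measure.pi fun _ => expMeasure 1 from rfl]; infer_instance
  set c : ℝ := σ^2 / P with hc
  have hc0 : 0 ≤ c := by positivity
  have hιF : ι - 1 < m + 1 := by omega
  set X : (Fin (m+1) → ℝ) → ℝ := fun x => orderStat x ⟨ι - 1, hιF⟩ with hX
  set term : Fin (m+1) → Finset (Fin (m+1)) → (Fin (m+1) → ℝ) → ℝ≥0∞ := fun k S x =>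
    ENNReal.ofReal (1 / x k) * ∏ j : Fin (m+1),
      (if (if j ∈ S then x j < x k else x k ≤ x j) then (1:ℝ≥0∞) else 0) with hterm
  set F : (Fin (m+1) → ℝ) → ℝ≥0∞ := fun x =>
    ∑ k : Fin (m+1), ∑ S ∈ Finset.powersetCard (ι-1) (Finset.univ.erase k), term k S x with hF
  have hterm_meas : ∀ k S, Measurable (term k S) := by
    intro k S
    rw [hterm]
    apply Measurable.mul
    · exact (measurable_const.div (measurable_pi_apply k)).ennreal_ofReal
    · apply Finset.measurable_prod
      intro j _
      by_cases hj : j ∈ S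
      · simp only [hj, if_true]
        exact Measurable.ite (measurableSet_lt (measurable_pi_apply j) (measurable_pi_apply k))
          measurable_const measurable_const
      · simp only [hj, if_false]
        exact Measurable.ite (measurableSet_le (measurable_pi_apply k) (measurable_pi_apply j))
          measurable_const measurable_const
  have hF_meas : Measurable F := by
    rw [hF]
    exact Finset.measurable_sum _ fun k _ => Finset.measurable_sum _ fun S _ => hterm_meas k S
  -- a.e. pointwise bound
  have hae : ∀ᵐ x ∂(muK (m+1)), ENNReal.ofReal
        ((∑ k : Fin (m+1), if (k : ℕ) < ι then
            (a x * Real.sqrt (orderStat x k) * Real.sqrt P - 1) ^ 2 else 0) +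
          σ ^ 2 * (a x) ^ 2)
      ≤ ENNReal.ofReal (ι : ℝ) + ENNReal.ofReal c * F x := by
    filter_upwards [hmem, muK_ae_pos (m+1), muK_ae_inj m] with x hx hpos hinj
    obtain ⟨hx1, hx2⟩ := hx
    have hx2' : a x ≤ 1 / (Real.sqrt (X x) * Real.sqrt P) := hx2
    have hXpos : 0 < X x := hpos _
    have hsq : 0 < Real.sqrt (X x) * Real.sqrt P := by positivity
    have ha0 : 0 ≤ a x := by
      by_cases hcase : ι = m + 1
      · rw [if_pos hcase] at hx1; exact hx1
      · rw [if_neg hcase] at hx1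
        exact le_of_lt (lt_of_le_of_lt (one_div_nonneg.mpr (by positivity)) hx1)
    have haxb : a x * (Real.sqrt (X x) * Real.sqrt P) ≤ 1 :=
      (le_div_iff₀ hsq).mp hx2'
    have hsum : (∑ k : Fin (m+1), if (k : ℕ) < ι then
        (a x * Real.sqrt (orderStat x k) * Real.sqrt P - 1) ^ 2 else 0) ≤ (ι : ℝ) := by
      calc (∑ k : Fin (m+1), if (k : ℕ) < ι then
            (a x * Real.sqrt (orderStat x k) * Real.sqrt P - 1) ^ 2 else 0)
          ≤ ∑ k : Fin (m+1), (if (k : ℕ) < ι then (1:ℝ) else 0) := by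
            apply Finset.sum_le_sum
            intro k _
            split_ifs with hk
            · have hle : orderStat x k ≤ X x := by
                apply orderStat_mono x
                exact Fin.le_def.mpr (by simp only [Fin.val_mk]; omega)
              have hsle : Real.sqrt (orderStat x k) ≤ Real.sqrt (X x) :=
                Real.sqrt_le_sqrt hle
              have ht0 : 0 ≤ a x * Real.sqrt (orderStat x k) * Real.sqrt P :=
                mul_nonneg (mul_nonneg ha0 (Real.sqrt_nonneg _)) (Real.sqrt_nonneg _)
              have ht1 : a x * Real.sqrt (orderStat x k) * Real.sqrt P ≤ 1 := by
                calc a x * Real.sqrt (orderStat x k) * Real.sqrt P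
                    ≤ a x * Real.sqrt (X x) * Real.sqrt P := by
                      apply mul_le_mul_of_nonneg_right _ (Real.sqrt_nonneg P)
                      exact mul_le_mul_of_nonneg_left hsle ha0
                  _ = a x * (Real.sqrt (X x) * Real.sqrt P) := by ring
                  _ ≤ 1 := haxb
              nlinarith
            · exact le_rfl
        _ = ((Finset.univ.filter fun k : Fin (m+1) => (k : ℕ) < ι).card : ℝ) := by
            rw [Finset.sum_boole]
        _ = (ι : ℝ) := by rw [card_filter_val_lt (by omega)]
    have ha2 : σ ^ 2 * (a x) ^ 2 ≤ c * (1 / X x) := by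
      have hax2 : (a x) ^ 2 ≤ (1 / (Real.sqrt (X x) * Real.sqrt P)) ^ 2 :=
        pow_le_pow_left₀ ha0 hx2' 2
      have he : (1 / (Real.sqrt (X x) * Real.sqrt P)) ^ 2 = 1 / (X x * P) := by
        rw [div_pow, one_pow, mul_pow, Real.sq_sqrt hXpos.le, Real.sq_sqrt hP.le]
      rw [he] at hax2
      have he2 : c * (1 / X x) = σ ^ 2 * (1 / (X x * P)) := by
        rw [hc]; field_simp
      rw [he2]
      exact mul_le_mul_of_nonneg_left hax2 (sq_nonneg σ)
    have hlow : ENNReal.ofReal (1 / X x) ≤ F x := by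
      set k0 : Fin (m+1) := Tuple.sort x ⟨ι - 1, hιF⟩ with hk0
      have hxk0 : x k0 = X x := rfl
      set S0 : Finset (Fin (m+1)) := Finset.univ.filter (fun j => x j < x k0) with hS0
      have hS0card : S0.card = ι - 1 := by
        rw [hS0]
        exact count_lt_orderStat hinj ⟨ι - 1, hιF⟩
      have hS0mem : S0 ∈ Finset.powersetCard (ι-1) (Finset.univ.erase k0) := by
        rw [Finset.mem_powersetCard]
        refine ⟨?_, hS0card⟩
        intro j hj
        have hjlt : x j < x k0 := (Finset.mem_filter.mp hj).2
        exact Finset.mem_erase.mpr ⟨fun hc => absurd (hc ▸ hjlt) (lt_irrefl _), Finset.mem_univ _⟩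
      have hterm0 : term k0 S0 x = ENNReal.ofReal (1 / X x) := by
        rw [hterm]
        simp only
        have hone : (∏ j : Fin (m+1),
            (if (if j ∈ S0 then x j < x k0 else x k0 ≤ x j) then (1:ℝ≥0∞) else 0)) = 1 := by
          apply Finset.prod_eq_one
          intro j _
          by_cases hj : j ∈ S0
          · have hC : (if j ∈ S0 then x j < x k0 else x k0 ≤ x j) := by
              rw [if_pos hj]; exact (Finset.mem_filter.mp hj).2
            rw [if_pos hC]
          · have hC : (if j ∈ S0 then x j < x k0 else x k0 ≤ x j) := by
              rw [if_neg hj]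
              by_contra hcon
              exact hj (Finset.mem_filter.mpr ⟨Finset.mem_univ _, not_le.mp hcon⟩)
            rw [if_pos hC]
        rw [hone, mul_one, hxk0]
      calc ENNReal.ofReal (1 / X x) = term k0 S0 x := hterm0.symm
        _ ≤ ∑ S ∈ Finset.powersetCard (ι-1) (Finset.univ.erase k0), term k0 S x :=
            Finset.single_le_sum (f := fun S => term k0 S x) (fun S _ => zero_le) hS0mem
        _ ≤ F x := by
            rw [hF]
            exact Finset.single_le_sum
              (f := fun k => ∑ S ∈ Finset.powersetCard (ι-1) (Finset.univ.erase k), term k S x)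
              (fun k _ => zero_le) (Finset.mem_univ k0)
    calc (ENNReal.ofReal
        ((∑ k : Fin (m+1), if (k : ℕ) < ι then
            (a x * Real.sqrt (orderStat x k) * Real.sqrt P - 1) ^ 2 else 0) +
          σ ^ 2 * (a x) ^ 2))
        ≤ ENNReal.ofReal ((ι : ℝ) + c * (1 / X x)) :=
          ENNReal.ofReal_le_ofReal (add_le_add hsum ha2)
      _ = ENNReal.ofReal (ι : ℝ) + ENNReal.ofReal (c * (1 / X x)) := by
          rw [ENNReal.ofReal_add (by positivity) (by positivity)]
      _ = ENNReal.ofReal (ι : ℝ) + ENNReal.ofReal c * ENNReal.ofReal (1 / X x) := by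
          rw [ENNReal.ofReal_mul hc0]
      _ ≤ ENNReal.ofReal (ι : ℝ) + ENNReal.ofReal c * F x := by
          exact add_le_add_right (mul_le_mul_right hlow _) _
  -- integrate the bound
  have hβ : ∀ k : Fin (m+1), ∀ S ∈ Finset.powersetCard (ι-1) (Finset.univ.erase k),
      ∫⁻ x, term k S x ∂(muK (m+1))
      ≤ ENNReal.ofReal (((ι-2).factorial * (m+1-ι).factorial : ℝ) / (m.factorial : ℝ)) := by
    intro k S hS
    obtain ⟨hsub, hcard⟩ := Finset.mem_powersetCard.mp hS
    have h := term_int_le m (ι-2) (m+1-ι) (by omega) k S hsub (by rw [hcard]; omega)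
    have e : (ι-2) + (m+1-ι) + 1 = m := by omega
    rw [e] at h
    exact h
  have hFint : ∫⁻ x, F x ∂(muK (m+1))
      ≤ (((m+1) * m.choose (ι-1) : ℕ) : ℝ≥0∞)
        * ENNReal.ofReal (((ι-2).factorial * (m+1-ι).factorial : ℝ) / (m.factorial : ℝ)) := by
    rw [hF, lintegral_finset_sum _
      (fun k _ => Finset.measurable_sum _ fun S _ => hterm_meas k S)]
    have hstep : ∀ k : Fin (m+1),
        ∫⁻ x, (∑ S ∈ Finset.powersetCard (ι-1) (Finset.univ.erase k), term k S x) ∂(muK (m+1))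
        ≤ (m.choose (ι-1) : ℝ≥0∞)
          * ENNReal.ofReal (((ι-2).factorial * (m+1-ι).factorial : ℝ) / (m.factorial : ℝ)) := by
      intro k
      rw [lintegral_finset_sum _ (fun S _ => hterm_meas k S)]
      calc ∑ S ∈ Finset.powersetCard (ι-1) (Finset.univ.erase k),
            ∫⁻ x, term k S x ∂(muK (m+1))
          ≤ ∑ S ∈ Finset.powersetCard (ι-1) (Finset.univ.erase k),
            ENNReal.ofReal (((ι-2).factorial * (m+1-ι).factorial : ℝ) / (m.factorial : ℝ)) :=
            Finset.sum_le_sum (hβ k)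
        _ = (Finset.powersetCard (ι-1) (Finset.univ.erase k)).card
            • ENNReal.ofReal (((ι-2).factorial * (m+1-ι).factorial : ℝ) / (m.factorial : ℝ)) :=
            Finset.sum_const _
        _ = (m.choose (ι-1) : ℝ≥0∞)
            * ENNReal.ofReal (((ι-2).factorial * (m+1-ι).factorial : ℝ) / (m.factorial : ℝ)) := by
            rw [Finset.card_powersetCard, Finset.card_erase_of_mem (Finset.mem_univ k),
              Finset.card_univ, Fintype.card_fin]
            rw [nsmul_eq_mul]
            norm_num
    calc ∑ k : Fin (m+1), ∫⁻ x,
          (∑ S ∈ Finset.powersetCard (ι-1) (Finset.univ.erase k), term k S x) ∂(muK (m+1))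
        ≤ ∑ _k : Fin (m+1), (m.choose (ι-1) : ℝ≥0∞)
          * ENNReal.ofReal (((ι-2).factorial * (m+1-ι).factorial : ℝ) / (m.factorial : ℝ)) :=
          Finset.sum_le_sum fun k _ => hstep k
      _ = (((m+1) * m.choose (ι-1) : ℕ) : ℝ≥0∞)
          * ENNReal.ofReal (((ι-2).factorial * (m+1-ι).factorial : ℝ) / (m.factorial : ℝ)) := by
          rw [Finset.sum_const, Finset.card_univ, Fintype.card_fin, nsmul_eq_mul]
          push_cast
          ring
  -- final arithmetic
  have harith : c * (((m+1) * m.choose (ι-1) : ℕ)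
      * (((ι-2).factorial * (m+1-ι).factorial : ℝ) / (m.factorial : ℝ)))
      = σ ^ 2 * ((m:ℝ)+1) / (P * ((ι : ℝ) - 1)) := by
    have hch : (m.choose (ι-1) : ℝ) * ((ι-1).factorial : ℝ) * ((m-(ι-1)).factorial : ℝ)
        = (m.factorial : ℝ) := by
      exact_mod_cast congrArg Nat.cast (Nat.choose_mul_factorial_mul_factorial
        (show ι - 1 ≤ m by omega))
    have hfac1 : ((ι-1).factorial : ℝ) = ((ι:ℝ) - 1) * ((ι-2).factorial : ℝ) := by
      rw [show ι - 1 = (ι-2) + 1 by omega, Nat.factorial_succ]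
      push_cast [show ((ι:ℕ) - 2 : ℕ) = ι - 2 from rfl]
      have : ((ι - 2 : ℕ) : ℝ) = (ι : ℝ) - 2 := by
        have : (2:ℕ) ≤ ι := hι2
        push_cast [Nat.cast_sub this]
        ring
      rw [this]; ring
    have hmiι : (m+1-ι) = m - (ι-1) := by omega
    have hι1pos : (0:ℝ) < (ι:ℝ) - 1 := by
      have : (2:ℝ) ≤ (ι:ℝ) := by exact_mod_cast hι2
      linarith
    have hfacpos : (0:ℝ) < (m.factorial : ℝ) := by positivity
    have hfac2pos : (0:ℝ) < ((ι-2).factorial : ℝ) := by positivity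
    have hfac3pos : (0:ℝ) < ((m-(ι-1)).factorial : ℝ) := by positivity
    rw [hmiι]
    rw [hfac1] at hch
    push_cast
    rw [hc]
    field_simp
    linear_combination hch
  calc (∫⁻ x : Fin (m+1) → ℝ, ENNReal.ofReal
        ((∑ k : Fin (m+1), if (k : ℕ) < ι then
            (a x * Real.sqrt (orderStat x k) * Real.sqrt P - 1) ^ 2 else 0) +
          σ ^ 2 * (a x) ^ 2) ∂(muK (m+1)))
      ≤ ∫⁻ x, (ENNReal.ofReal (ι : ℝ) + ENNReal.ofReal c * F x) ∂(muK (m+1)) :=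
        lintegral_mono_ae hae
    _ = ENNReal.ofReal (ι : ℝ) + ENNReal.ofReal c * ∫⁻ x, F x ∂(muK (m+1)) := by
        rw [lintegral_add_left measurable_const, lintegral_const, measure_univ, mul_one,
          lintegral_const_mul _ hF_meas]
    _ ≤ ENNReal.ofReal (ι : ℝ) + ENNReal.ofReal c
        * ((((m+1) * m.choose (ι-1) : ℕ) : ℝ≥0∞)
          * ENNReal.ofReal (((ι-2).factorial * (m+1-ι).factorial : ℝ) / (m.factorial : ℝ))) :=
        add_le_add_right (mul_le_mul_right hFint _) _
    _ = ENNReal.ofReal ((ι : ℝ) + σ ^ 2 * ((m:ℝ)+1) / (P * ((ι : ℝ) - 1))) := by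
        have h2ι : (2:ℝ) ≤ (ι:ℝ) := by exact_mod_cast hι2
        rw [← ENNReal.ofReal_natCast (((m+1) * m.choose (ι-1) : ℕ)),
          ← ENNReal.ofReal_mul (Nat.cast_nonneg _), ← ENNReal.ofReal_mul hc0, harith,
          ← ENNReal.ofReal_add (Nat.cast_nonneg _)
            (div_nonneg (by positivity) (mul_nonneg hP.le (by linarith)))]
    _ = ENNReal.ofReal ((ι : ℝ) + σ ^ 2 * ((m+1 : ℕ) : ℝ) / (P * ((ι : ℝ) - 1))) := by
        norm_num
end
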